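/- The real number α = arccos(4/5) is not a rational multiple of π; consequently, for every nonzero integer n, both sin(n·α) and cos(n·α) are nonzero. -/
import Mathlib

open Real

lemma arccos45_key (n : ℕ) : ∃ a b : ℤ,
    Real.cos (((n:ℝ)+1) * Real.arccos (4/5)) = (a : ℝ) / 5^(n+1) ∧
    Real.sin (((n:ℝ)+1) * Real.arccos (4/5)) = 3 * (b : ℝ) / 5^(n+1) ∧
    (5 : ℤ) ∣ (a - 4*b) ∧ ¬ (5:ℤ) ∣ b := by
  have hcos : Real.cos (Real.arccos (4/5)) = 4/5 :=
    Real.cos_arccos (by norm_num) (by norm_num)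
  have hsin : Real.sin (Real.arccos (4/5)) = 3/5 := by
    rw [Real.sin_arccos, show (1 : ℝ) - (4/5)^2 = (3/5)^2 by norm_num]
    exact Real.sqrt_sq (by norm_num)
  induction n with
  | zero =>
    refine ⟨4, 1, by simpa using hcos, ?_, by norm_num, by norm_num⟩
    push_cast
    rw [show ((0:ℝ)+1) * arccos (4/5) = arccos (4/5) by ring, hsin]
    norm_num
  | succ n ih =>
    obtain ⟨a, b, hc, hs, hd, hb⟩ := ih
    refine ⟨4*a - 9*b, a + 4*b, ?_, ?_, by omega, by omega⟩
    · have h : ((n:ℝ)+1+1) * arccos (4/5)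
          = ((n:ℝ)+1) * arccos (4/5) + arccos (4/5) := by ring
      push_cast
      rw [h, Real.cos_add, hc, hs, hcos, hsin]
      field_simp
      ring
    · have h : ((n:ℝ)+1+1) * arccos (4/5)
          = ((n:ℝ)+1) * arccos (4/5) + arccos (4/5) := by ring
      push_cast
      rw [h, Real.sin_add, hc, hs, hcos, hsin]
      field_simp
      ring

lemma arccos45_nat (n : ℕ) (hn : n ≠ 0) :
    Real.sin ((n : ℝ) * Real.arccos (4 / 5)) ≠ 0 ∧
    Real.cos ((n : ℝ) * Real.arccos (4 / 5)) ≠ 0 := by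
  obtain ⟨m, rfl⟩ := Nat.exists_eq_succ_of_ne_zero hn
  obtain ⟨a, b, hc, hs, hd, hb⟩ := arccos45_key m
  have hne : ((m+1:ℕ):ℝ) = (m:ℝ)+1 := by push_cast; ring
  constructor
  · rw [hne, hs]
    have hb0 : b ≠ 0 := by rintro rfl; exact hb ⟨0, by ring⟩
    have : (b:ℝ) ≠ 0 := Int.cast_ne_zero.mpr hb0
    positivity
  · rw [hne, hc]
    have ha0 : a ≠ 0 := by rintro rfl; omega
    have : (a:ℝ) ≠ 0 := Int.cast_ne_zero.mpr ha0
    positivity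

/-- `α = arccos (4/5)` is not a rational multiple of `π`; consequently
`sin (n·α)` and `cos (n·α)` are nonzero for every nonzero integer `n`. -/
theorem arccos_four_fifths_irrational_multiple_of_pi :
    (¬ ∃ q : ℚ, Real.arccos (4 / 5) = (q : ℝ) * Real.pi) ∧
    ∀ n : ℤ, n ≠ 0 →
      Real.sin ((n : ℝ) * Real.arccos (4 / 5)) ≠ 0 ∧
      Real.cos ((n : ℝ) * Real.arccos (4 / 5)) ≠ 0 := by
  have main : ∀ n : ℤ, n ≠ 0 →
      Real.sin ((n : ℝ) * Real.arccos (4 / 5)) ≠ 0 ∧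
      Real.cos ((n : ℝ) * Real.arccos (4 / 5)) ≠ 0 := by
    intro n hn
    rcases lt_or_gt_of_ne hn with h | h
    · have hm : (n.natAbs : ℕ) ≠ 0 := by omega
      have hcast : (n : ℝ) = -(n.natAbs : ℝ) := by
        rw [Nat.cast_natAbs, abs_of_neg h]
        push_cast; ring
      obtain ⟨hs, hc⟩ := arccos45_nat n.natAbs hm
      rw [hcast]
      rw [show (-(n.natAbs : ℝ)) * Real.arccos (4/5)
          = -((n.natAbs : ℝ) * Real.arccos (4/5)) by ring,
        Real.sin_neg, Real.cos_neg]
      exact ⟨neg_ne_zero.mpr hs, hc⟩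
    · have hm : (n.natAbs : ℕ) ≠ 0 := by omega
      have hcast : (n : ℝ) = (n.natAbs : ℝ) := by
        rw [Nat.cast_natAbs, abs_of_pos h]
      rw [hcast]
      exact arccos45_nat n.natAbs hm
  refine ⟨?_, main⟩
  rintro ⟨q, hq⟩
  have hden : (2 * (q.den : ℤ)) ≠ 0 := by positivity
  have hs := (main _ hden).1
  apply hs
  have hqd : ((q.den : ℚ)) * q = (q.num : ℚ) := by
    rw [mul_comm]; exact_mod_cast Rat.mul_den_eq_num q
  have : ((2 * (q.den : ℤ) : ℤ) : ℝ) * Real.arccos (4/5)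
      = ((2 * q.num : ℤ) : ℝ) * Real.pi := by
    rw [hq]
    have h2 : ((q.den : ℝ)) * (q : ℝ) = (q.num : ℝ) := by exact_mod_cast hqd
    push_cast
    linear_combination 2 * Real.pi * h2
  rw [this]
  exact Real.sin_int_mul_pi _
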